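/- arXiv:1309.0158 — 2 statements merged into one kernel-verified Lean document; each statement's English description precedes it below -/
import Mathlib

section
/- Let P and P̃ be stochastic matrices on a finite set 𝒱. Suppose P is irreducible with invariant probability vector π and finite mixing time t_mix, and let π̃ be an invariant probability vector of P̃. Let W ⊆ 𝒱 with supp(P̃ − P) ⊆ W and W ≠ 𝒱, let τ*_W be the entrance time on W for P, and let γ̃_W be the exit probability from W for P̃ and π̃. If γ̃_W · τ*_W > 0, then ‖π̃ − π‖ ≤ Ψ( t_mix / (γ̃_W · τ*_W) ). -/
open scoped Classical BigOperators
open Finset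

variable {V : Type*}

/-- A (row-)stochastic matrix: nonnegative entries, rows summing to one. -/
def IsStochastic [Fintype V] (P : Matrix V V ℝ) : Prop :=
  (∀ u v, 0 ≤ P u v) ∧ ∀ u, ∑ v, P u v = 1

/-- Irreducibility: the digraph with an edge `(u,v)` whenever `P u v > 0`
is strongly connected. -/
def IrreducibleMatrix [Fintype V] (P : Matrix V V ℝ) : Prop :=
  ∀ u v : V, Relation.ReflTransGen (fun a b => 0 < P a b) u v

/-- `p` is an invariant probability (row) vector of `P`. -/
def InvariantProb [Fintype V] (P : Matrix V V ℝ) (p : V → ℝ) : Prop :=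
  (∀ v, 0 ≤ p v) ∧ (∑ v, p v = 1) ∧ ∀ v, ∑ u, p u * P u v = p v

/-- Total variation distance. -/
noncomputable def tvDist [Fintype V] (mu p : V → ℝ) : ℝ :=
  (1 / 2) * ∑ v, |mu v - p v|

/-- The smallest positive solution of `x * log (e^2 / x) = 1`. -/
noncomputable def xstar : ℝ :=
  sInf {x : ℝ | 0 < x ∧ x * Real.log (Real.exp 2 / x) = 1}

/-- The function `Ψ`: `Ψ(x) = x log(e²/x)` for `x ≤ x*`, and `1` for `x > x*`
(note `Ψ(0) = 0` since `Real.log (e²/0) = Real.log 0 = 0`). -/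
noncomputable def Psi (x : ℝ) : ℝ :=
  if x ≤ xstar then x * Real.log (Real.exp 2 / x) else 1

open Fin.NatCast in
/-- `phi P W w k` is the probability that a chain with transition matrix `P`
started at `w` exits `W` exactly at time `k`: the sum over `(k+1)`-tuples
`ξ` with `ξ 0 = w`, `ξ l ∈ W` for `0 < l < k`, `ξ k ∉ W`, of `∏ P (ξ (l-1)) (ξ l)`. -/
noncomputable def phi [Fintype V] (P : Matrix V V ℝ) (W : Finset V) (w : V) (k : ℕ) : ℝ :=
  ∑ ξ ∈ Finset.univ.filter (fun ξ : Fin (k + 1) → V =>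
      ξ 0 = w ∧ (∀ l : ℕ, 0 < l → l < k → ξ l ∈ W) ∧ ξ k ∉ W),
    ∏ l ∈ Finset.range k, P (ξ l) (ξ (l + 1))

/-- `(1/t) * min_{w ∈ W, p w > 0} ∑_{k=1}^t phi w k` (the minimum over an empty
index set is taken to be `1`). -/
noncomputable def exitProbAux [Fintype V] (P : Matrix V V ℝ) (p : V → ℝ) (W : Finset V)
    (t : ℕ) : ℝ :=
  if h : (W.filter fun w => 0 < p w).Nonempty then
    (W.filter fun w => 0 < p w).inf' h
      (fun w => (1 / (t : ℝ)) * ∑ k ∈ Finset.Icc 1 t, phi P W w k)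
  else 1

/-- The exit probability from `W`:
`sup_{t ≥ 1} min_{w ∈ W, p w > 0} (1/t) ∑_{k=1}^t phi w k`. -/
noncomputable def exitProb [Fintype V] (P : Matrix V V ℝ) (p : V → ℝ) (W : Finset V) : ℝ :=
  sSup {x : ℝ | ∃ t : ℕ, 1 ≤ t ∧ x = exitProbAux P p W t}

/-- The entrance time `τ*_W := min_{u ∉ W} τ^u`. -/
noncomputable def entranceTime (tau : V → ℝ) (W : Finset V) : ℝ :=
  sInf {x : ℝ | ∃ u, u ∉ W ∧ x = tau u}

/-! Let `g v = P̃(v, Wᶜ)` for `v ∈ W` (and `0` off `W`). A chain leaving `W` at time `k` from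
`w ∈ W` does so with probability at most `(P̃^(k-1) g) w`, so invariance of `π̃` gives
`γ̃_W · π̃(W) ≤ π̃ ⬝ g`. The hitting times satisfy the drift inequality
`P̃ τ ≥ τ - 1 + τ*_W · g`, and pairing it with `π̃` gives `τ*_W · (π̃ ⬝ g) ≤ 1`; hence
`π̃(W) ≤ 1 / (γ̃_W τ*_W)`.

Since `P̃` and `P` differ only in rows indexed by `W`, `‖π̃ - π̃ P‖ ≤ π̃(W)`, so
`‖π̃ - π̃ P^t‖ ≤ t π̃(W)`; and by Dobrushin's contraction `‖π̃ P^(m t_mix) - π‖ ≤ e^{-m}`.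
Thus `‖π̃ - π‖ ≤ m x + e^{-m}` for every `m`, where `x = t_mix / (γ̃_W τ*_W)`, and
`m = ⌈log (1/x)⌉` yields `x log (e²/x)`. -/

open Finset Matrix

section TotalVariation

variable [Fintype V]

lemma tvDist_nonneg (μ ν : V → ℝ) : 0 ≤ tvDist μ ν := by
  unfold tvDist; positivity

lemma tvDist_eq_zero_iff {μ ν : V → ℝ} : tvDist μ ν = 0 ↔ μ = ν := by
  simp [tvDist, sum_eq_zero_iff_of_nonneg, sub_eq_zero, funext_iff]

lemma tvDist_self (μ : V → ℝ) : tvDist μ μ = 0 :=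
  tvDist_eq_zero_iff.mpr rfl

lemma tvDist_triangle (μ ν ρ : V → ℝ) : tvDist μ ρ ≤ tvDist μ ν + tvDist ν ρ := by
  unfold tvDist
  rw [← mul_add, ← sum_add_distrib]
  gcongr with v
  exact abs_sub_le _ _ _

lemma tvDist_le_one {μ ν : V → ℝ} (hμ : ∀ v, 0 ≤ μ v) (hμ1 : ∑ v, μ v = 1)
    (hν : ∀ v, 0 ≤ ν v) (hν1 : ∑ v, ν v = 1) : tvDist μ ν ≤ 1 := by
  have : ∑ v, |μ v - ν v| ≤ ∑ v, (μ v + ν v) := by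
    gcongr with v
    exact (abs_sub _ _).trans_eq (by rw [abs_of_nonneg (hμ v), abs_of_nonneg (hν v)])
  rw [sum_add_distrib, hμ1, hν1] at this
  unfold tvDist
  linarith

lemma sum_posPart_eq_tvDist {μ ν : V → ℝ} (h : ∑ v, μ v = ∑ v, ν v) :
    ∑ v, (μ v - ν v)⁺ = tvDist μ ν ∧ ∑ v, (μ v - ν v)⁻ = tvDist μ ν := by
  have hdiff : ∑ v, ((μ v - ν v)⁺ - (μ v - ν v)⁻) = 0 := by
    simp only [posPart_sub_negPart, sum_sub_distrib, h, sub_self]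
  have habs : ∑ v, ((μ v - ν v)⁺ + (μ v - ν v)⁻) = 2 * tvDist μ ν := by
    simp only [posPart_add_negPart, tvDist]; ring
  rw [sum_sub_distrib] at hdiff
  rw [sum_add_distrib] at habs
  constructor <;> linarith

lemma tvDist_vecMul_le_sum (A B : Matrix V V ℝ) {μ : V → ℝ} (hμ : ∀ v, 0 ≤ μ v) :
    tvDist (μ ᵥ* A) (μ ᵥ* B) ≤ ∑ u, μ u * tvDist (A u) (B u) := by
  have hv : ∀ v, |(μ ᵥ* A) v - (μ ᵥ* B) v| ≤ ∑ u, μ u * |A u v - B u v| := fun v => by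
    simp only [vecMul, dotProduct, ← sum_sub_distrib, ← mul_sub]
    refine (abs_sum_le_sum_abs _ _).trans_eq (sum_congr rfl fun u _ => ?_)
    rw [abs_mul, abs_of_nonneg (hμ u)]
  calc tvDist (μ ᵥ* A) (μ ᵥ* B) ≤ 1 / 2 * ∑ v, ∑ u, μ u * |A u v - B u v| := by
        unfold tvDist; gcongr with v; exact hv v
    _ = ∑ u, μ u * tvDist (A u) (B u) := by
        rw [sum_comm, mul_sum]
        refine sum_congr rfl fun u _ => ?_
        rw [tvDist, ← mul_sum]; ring

/-- Dobrushin's contraction. With `p, n` the positive and negative parts of `μ - ν`, both of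
mass `β = tvDist μ ν`, one has `β • (μ - ν) ᵥ* A = ∑ u, ∑ v, p u * n v • (A u - A v)`. -/
lemma tvDist_vecMul_le_mul {A : Matrix V V ℝ} {μ ν : V → ℝ} {ε : ℝ}
    (hsum : ∑ v, μ v = ∑ v, ν v) (hA : ∀ u v, tvDist (A u) (A v) ≤ ε) :
    tvDist (μ ᵥ* A) (ν ᵥ* A) ≤ ε * tvDist μ ν := by
  rcases (tvDist_nonneg μ ν).eq_or_lt with hβ | hβ
  · obtain rfl := tvDist_eq_zero_iff.mp hβ.symm
    rw [← hβ, tvDist_self, mul_zero]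
  obtain ⟨hp, hn⟩ := sum_posPart_eq_tvDist hsum
  set β := tvDist μ ν
  set p : V → ℝ := fun u => (μ u - ν u)⁺
  set n : V → ℝ := fun u => (μ u - ν u)⁻
  have hsplit : ∀ w, β * ((μ ᵥ* A) w - (ν ᵥ* A) w) =
      ∑ u, ∑ v, p u * n v * (A u w - A v w) := by
    intro w
    have hpn : ∀ u, μ u - ν u = p u - n u := fun u => (posPart_sub_negPart _).symm
    have hμν : (μ ᵥ* A) w - (ν ᵥ* A) w = ∑ u, p u * A u w - ∑ v, n v * A v w := by
      simp only [vecMul, dotProduct, ← sum_sub_distrib, ← sub_mul, hpn]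
    have hpos : ∑ u, ∑ v, p u * n v * A u w = β * ∑ u, p u * A u w := by
      rw [← hn, sum_mul, sum_comm]
      exact sum_congr rfl fun v _ => by rw [mul_sum]; exact sum_congr rfl fun u _ => by ring
    have hneg : ∑ u, ∑ v, p u * n v * A v w = β * ∑ v, n v * A v w := by
      rw [← hp, sum_mul]
      exact sum_congr rfl fun u _ => by rw [mul_sum]; exact sum_congr rfl fun v _ => by ring
    simp only [mul_sub, sum_sub_distrib, hpos, hneg, hμν]
  have key : β * tvDist (μ ᵥ* A) (ν ᵥ* A) ≤ β * (ε * β) := calc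
    β * tvDist (μ ᵥ* A) (ν ᵥ* A)
        = 1 / 2 * ∑ w, |∑ u, ∑ v, p u * n v * (A u w - A v w)| := by
      simp only [tvDist, ← hsplit, abs_mul, abs_of_pos hβ, ← mul_sum]; ring
    _ ≤ 1 / 2 * ∑ w, ∑ u, ∑ v, p u * n v * |A u w - A v w| := by
      gcongr with w
      refine (abs_sum_le_sum_abs _ _).trans (sum_le_sum fun u _ => ?_)
      refine (abs_sum_le_sum_abs _ _).trans_eq (sum_congr rfl fun v _ => ?_)
      rw [abs_mul, abs_of_nonneg (mul_nonneg (posPart_nonneg _) (negPart_nonneg _))]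
    _ = ∑ u, ∑ v, p u * n v * tvDist (A u) (A v) := by
      simp only [tvDist, mul_sum]
      rw [sum_comm]
      refine sum_congr rfl fun u _ => ?_
      rw [sum_comm]
      exact sum_congr rfl fun v _ => sum_congr rfl fun w _ => by ring
    _ ≤ ∑ u, ∑ v, p u * n v * ε := by
      gcongr with u _ v _
      exact hA u v
    _ = β * (ε * β) := by
      simp only [← sum_mul, ← mul_sum, hp, hn]; ring
  exact le_of_mul_le_mul_left key hβ

end TotalVariation

lemma vecMul_pow_eq_self [Fintype V] {A : Matrix V V ℝ} {μ : V → ℝ} (h : μ ᵥ* A = μ)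
    (n : ℕ) : μ ᵥ* A ^ n = μ := by
  induction n with
  | zero => simp
  | succ n ih => rw [pow_succ, ← vecMul_vecMul, ih, h]

lemma InvariantProb.vecMul_eq [Fintype V] {A : Matrix V V ℝ} {μ : V → ℝ}
    (h : InvariantProb A μ) : μ ᵥ* A = μ :=
  funext h.2.2

namespace IsStochastic

variable [Fintype V] {A B : Matrix V V ℝ}

lemma one : IsStochastic (1 : Matrix V V ℝ) :=
  ⟨fun u v => by rw [one_apply]; split_ifs <;> norm_num, fun u => by simp [one_apply]⟩

lemma mul (hA : IsStochastic A) (hB : IsStochastic B) : IsStochastic (A * B) := by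
  refine ⟨fun u v => sum_nonneg fun w _ => mul_nonneg (hA.1 u w) (hB.1 w v), fun u => ?_⟩
  simp only [mul_apply]
  rw [sum_comm]
  simp [← mul_sum, hB.2, hA.2 u]

lemma pow (hA : IsStochastic A) (n : ℕ) : IsStochastic (A ^ n) := by
  induction n with
  | zero => exact one
  | succ n ih => rw [pow_succ]; exact ih.mul hA

lemma sum_vecMul (hA : IsStochastic A) (μ : V → ℝ) : ∑ v, (μ ᵥ* A) v = ∑ v, μ v := by
  simp only [vecMul, dotProduct]
  rw [sum_comm]
  simp [← mul_sum, hA.2]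

lemma tvDist_row_le_one (hA : IsStochastic A) (u v : V) : tvDist (A u) (A v) ≤ 1 :=
  tvDist_le_one (hA.1 u) (hA.2 u) (hA.1 v) (hA.2 v)

lemma tvDist_vecMul_pow_le_pow_mul (hA : IsStochastic A) {μ ν : V → ℝ} {ε : ℝ} (hε : 0 ≤ ε)
    (hrow : ∀ u v, tvDist (A u) (A v) ≤ ε) (hsum : ∑ v, μ v = ∑ v, ν v) (m : ℕ) :
    tvDist (μ ᵥ* A ^ m) (ν ᵥ* A ^ m) ≤ ε ^ m * tvDist μ ν := by
  induction m with
  | zero => simp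
  | succ m ih =>
    rw [pow_succ, ← vecMul_vecMul, ← vecMul_vecMul, pow_succ, mul_comm _ ε, mul_assoc]
    refine (tvDist_vecMul_le_mul ?_ hrow).trans (mul_le_mul_of_nonneg_left ih hε)
    rw [(hA.pow m).sum_vecMul, (hA.pow m).sum_vecMul, hsum]

lemma tvDist_vecMul_pow_le (hA : IsStochastic A) (μ : V → ℝ) (t : ℕ) :
    tvDist μ (μ ᵥ* A ^ t) ≤ t * tvDist μ (μ ᵥ* A) := by
  induction t with
  | zero => simp [tvDist_self]
  | succ t ih =>
    have hshift : tvDist (μ ᵥ* A ^ t) (μ ᵥ* A ^ (t + 1)) ≤ tvDist μ (μ ᵥ* A) := by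
      rw [pow_succ', ← vecMul_vecMul]
      simpa using tvDist_vecMul_le_mul (hA.sum_vecMul μ).symm (hA.pow t).tvDist_row_le_one
    push_cast
    linarith [tvDist_triangle μ (μ ᵥ* A ^ t) (μ ᵥ* A ^ (t + 1))]

lemma tvDist_vecMul_le_sum_of_rows_eq (hA : IsStochastic A) (hB : IsStochastic B)
    {μ : V → ℝ} (hμ : ∀ v, 0 ≤ μ v) {W : Finset V} (hAB : ∀ u ∉ W, A u = B u) :
    tvDist (μ ᵥ* A) (μ ᵥ* B) ≤ ∑ u ∈ W, μ u := by
  refine (tvDist_vecMul_le_sum A B hμ).trans ?_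
  rw [← sum_subset (subset_univ W) fun u _ hu => by rw [hAB u hu, tvDist_self, mul_zero]]
  exact sum_le_sum fun u _ => mul_le_of_le_one_right (hμ u)
    (tvDist_le_one (hA.1 u) (hA.2 u) (hB.1 u) (hB.2 u))

lemma tvDist_le_of_mixing (hA : IsStochastic A) {μ π : V → ℝ} (hμ : ∀ v, 0 ≤ μ v)
    (hμ1 : ∑ v, μ v = 1) (hπ : InvariantProb A π) {s : ℕ} {ε : ℝ} (hε : 0 ≤ ε)
    (hmix : ∀ u v, tvDist ((A ^ s) u) ((A ^ s) v) ≤ ε) (m : ℕ) :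
    tvDist μ π ≤ (s * m : ℕ) * tvDist μ (μ ᵥ* A) + ε ^ m := by
  have hconv : tvDist (μ ᵥ* A ^ (s * m)) π ≤ ε ^ m := by
    have := (hA.pow s).tvDist_vecMul_pow_le_pow_mul hε hmix (hμ1.trans hπ.2.1.symm) m
    rw [← pow_mul, vecMul_pow_eq_self hπ.vecMul_eq] at this
    exact this.trans (mul_le_of_le_one_right (pow_nonneg hε m) (tvDist_le_one hμ hμ1 hπ.1 hπ.2.1))
  calc tvDist μ π ≤ tvDist μ (μ ᵥ* A ^ (s * m)) + tvDist (μ ᵥ* A ^ (s * m)) π :=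
        tvDist_triangle _ _ _
    _ ≤ (s * m : ℕ) * tvDist μ (μ ᵥ* A) + ε ^ m := add_le_add (hA.tvDist_vecMul_pow_le μ _) hconv

end IsStochastic

section HittingTime

variable {W : Finset V} {tau : V → ℝ}

lemma hittingTime_nonneg [Fintype V] {P : Matrix V V ℝ} (hP : IsStochastic P)
    (htau0 : ∀ u ∈ W, tau u = 0) (htau1 : ∀ u ∉ W, tau u = 1 + ∑ v, P u v * tau v) (u : V) :
    0 ≤ tau u := by
  obtain ⟨m, -, hmin⟩ := exists_min_image univ tau ⟨u, mem_univ u⟩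
  -- a minimiser `m ∉ W` would satisfy `tau m ≥ 1 + tau m`
  have hm : m ∈ W := by
    by_contra hm
    have : tau m ≤ ∑ v, P m v * tau v := calc
      tau m = ∑ v, P m v * tau m := by rw [← sum_mul, hP.2 m, one_mul]
      _ ≤ ∑ v, P m v * tau v :=
        sum_le_sum fun v _ => mul_le_mul_of_nonneg_left (hmin v (mem_univ v)) (hP.1 m v)
    linarith [htau1 m hm]
  exact (htau0 m hm).symm.le.trans (hmin u (mem_univ u))

lemma entranceTime_nonneg (htau : ∀ u, 0 ≤ tau u) : 0 ≤ entranceTime tau W :=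
  Real.sInf_nonneg (by rintro _ ⟨u, -, rfl⟩; exact htau u)

lemma entranceTime_le (htau : ∀ u, 0 ≤ tau u) {u : V} (hu : u ∉ W) :
    entranceTime tau W ≤ tau u :=
  csInf_le ⟨0, by rintro _ ⟨v, -, rfl⟩; exact htau v⟩ ⟨u, hu, rfl⟩

end HittingTime

noncomputable def exitWeight [Fintype V] (P : Matrix V V ℝ) (W : Finset V) (v : V) : ℝ :=
  if v ∈ W then ∑ u ∈ Wᶜ, P v u else 0

lemma exitWeight_nonneg [Fintype V] {P : Matrix V V ℝ} (hP : ∀ u v, 0 ≤ P u v)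
    (W : Finset V) (v : V) : 0 ≤ exitWeight P W v := by
  unfold exitWeight
  split_ifs
  exacts [sum_nonneg fun u _ => hP v u, le_rfl]

/-- The drift inequality `Pt *ᵥ tau ≥ tau - 1 + τ*_W • exitWeight Pt W`, paired with the
invariant vector `p` of `Pt`, in which `tau` cancels. -/
lemma entranceTime_mul_dotProduct_exitWeight_le_one [Fintype V] {P Pt : Matrix V V ℝ}
    {p tau : V → ℝ} {W : Finset V} (hP : IsStochastic P) (hPt : ∀ u v, 0 ≤ Pt u v)
    (hrows : ∀ u ∉ W, Pt u = P u) (hp : InvariantProb Pt p) (htau0 : ∀ u ∈ W, tau u = 0)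
    (htau1 : ∀ u ∉ W, tau u = 1 + ∑ v, P u v * tau v) :
    entranceTime tau W * (p ⬝ᵥ exitWeight Pt W) ≤ 1 := by
  have htau := hittingTime_nonneg hP htau0 htau1
  set τ := entranceTime tau W
  have hdrift : ∀ u, tau u - 1 + τ * exitWeight Pt W u ≤ (Pt *ᵥ tau) u := by
    intro u
    by_cases hu : u ∈ W
    · have : τ * exitWeight Pt W u ≤ (Pt *ᵥ tau) u := calc
        τ * exitWeight Pt W u = ∑ v ∈ Wᶜ, Pt u v * τ := by
          rw [exitWeight, if_pos hu, mul_sum]; exact sum_congr rfl fun v _ => mul_comm _ _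
        _ ≤ ∑ v ∈ Wᶜ, Pt u v * tau v := sum_le_sum fun v hv =>
          mul_le_mul_of_nonneg_left (entranceTime_le htau (mem_compl.mp hv)) (hPt u v)
        _ ≤ ∑ v, Pt u v * tau v :=
          sum_le_univ_sum_of_nonneg fun v => mul_nonneg (hPt u v) (htau v)
      rw [htau0 u hu]
      linarith
    · simp [exitWeight, hu, mulVec, dotProduct, hrows u hu, htau1 u hu]
  have hpair : p ⬝ᵥ (Pt *ᵥ tau) = p ⬝ᵥ tau := by rw [dotProduct_mulVec, hp.vecMul_eq]
  simp only [dotProduct] at hpair ⊢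
  have hsum := sum_le_sum fun u (_ : u ∈ univ) => mul_le_mul_of_nonneg_left (hdrift u) (hp.1 u)
  simp only [mul_add, mul_sub, sum_add_distrib, sum_sub_distrib, mul_one, hp.2.1, hpair,
    mul_left_comm (p _) τ, ← mul_sum] at hsum
  linarith

lemma prod_path_cons {n : ℕ} (P : Matrix V V ℝ) (w : V) (η : Fin (n + 1) → V) :
    ∏ i : Fin (n + 1), P ((Fin.cons w η : Fin (n + 2) → V) i.castSucc)
        ((Fin.cons w η : Fin (n + 2) → V) i.succ) =
      P w (η 0) * ∏ i : Fin n, P (η i.castSucc) (η i.succ) := by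
  rw [Fin.prod_univ_succ]
  simp

lemma forall_interior_mem_cons {n : ℕ} (W : Finset V) (w : V) (η : Fin (n + 2) → V) :
    (∀ i, i ≠ 0 → i ≠ Fin.last (n + 2) → (Fin.cons w η : Fin (n + 3) → V) i ∈ W) ↔
      η 0 ∈ W ∧ ∀ i, i ≠ 0 → i ≠ Fin.last (n + 1) → η i ∈ W := by
  rw [Fin.forall_fin_succ]
  simp only [ne_eq, not_true_eq_false, false_imp_iff, true_and, Fin.succ_ne_zero,
    not_false_eq_true, Fin.cons_succ, forall_const, ← Fin.succ_last, Fin.succ_inj]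
  refine ⟨fun h => ⟨h 0 (by simp [Fin.ext_iff]), fun i _ => h i⟩, fun ⟨h0, h⟩ i hil => ?_⟩
  rcases eq_or_ne i 0 with rfl | hi0
  · exact h0
  · exact h i hi0 hil

section ExitPaths

variable [Fintype V]

open Fin.NatCast in
lemma phi_eq_sum_fin (P : Matrix V V ℝ) (W : Finset V) (w : V) (k : ℕ) :
    phi P W w k = ∑ ξ : Fin (k + 1) → V,
      if ξ 0 = w ∧ (∀ i, i ≠ 0 → i ≠ Fin.last k → ξ i ∈ W) ∧ ξ (Fin.last k) ∉ W
      then ∏ i : Fin k, P (ξ i.castSucc) (ξ i.succ) else 0 := by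
  rw [phi, sum_filter]
  refine sum_congr rfl fun ξ _ => ?_
  have hcond : (∀ l : ℕ, 0 < l → l < k → ξ l ∈ W) ↔
      ∀ i, i ≠ 0 → i ≠ Fin.last k → ξ i ∈ W := by
    refine ⟨fun h i hi0 hik => ?_, fun h l hl0 hlk => ?_⟩
    · simpa using h i (Nat.pos_of_ne_zero (Fin.val_ne_zero_iff.mpr hi0)) (Fin.val_lt_last hik)
    · have hl : ((l : ℕ) : Fin (k + 1)) = ⟨l, by omega⟩ := Fin.natCast_eq_mk (by omega)
      exact hl ▸ h _ (Fin.ne_of_val_ne hl0.ne') (Fin.ne_of_val_ne hlk.ne)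
  have hprod : ∏ l ∈ range k, P (ξ l) (ξ (l + 1)) =
      ∏ i : Fin k, P (ξ i.castSucc) (ξ i.succ) := by
    rw [prod_range]
    refine prod_congr rfl fun i _ => ?_
    congr 2 <;> ext <;> simp
  simp only [hcond, hprod, Fin.natCast_eq_last]

lemma phi_one (P : Matrix V V ℝ) (W : Finset V) (w : V) :
    phi P W w 1 = ∑ v ∈ Wᶜ, P w v := by
  rw [phi_eq_sum_fin, ← (piFinTwoEquiv fun _ => V).symm.sum_comp, Fintype.sum_prod_type]
  simp [ite_and, sum_ite_eq', sum_ite, filter_not, compl_eq_univ_sdiff]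

lemma phi_add_two (P : Matrix V V ℝ) (W : Finset V) (w : V) (n : ℕ) :
    phi P W w (n + 2) = ∑ v ∈ W, P w v * phi P W v (n + 1) := by
  simp only [phi_eq_sum_fin, mul_sum]
  rw [← (Fin.consEquiv fun _ => V).sum_comp, Fintype.sum_prod_type, sum_comm,
    sum_comm (s := W)]
  refine sum_congr rfl fun η _ => ?_
  simp only [Fin.consEquiv, Equiv.coe_fn_mk, prod_path_cons, forall_interior_mem_cons]
  simp [ite_and, sum_ite_eq]

end ExitPaths

section ExitProbability

variable [Fintype V] {P : Matrix V V ℝ} {W : Finset V} {p : V → ℝ}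

lemma phi_le_pow_mulVec_exitWeight (hP : ∀ u v, 0 ≤ P u v) (k : ℕ) {w : V} (hw : w ∈ W) :
    phi P W w (k + 1) ≤ (P ^ k *ᵥ exitWeight P W) w := by
  induction k generalizing w with
  | zero => simp [phi_one, exitWeight, hw]
  | succ k ih =>
    have hnonneg : ∀ v, 0 ≤ (P ^ k *ᵥ exitWeight P W) v := fun v =>
      sum_nonneg fun u _ => mul_nonneg (pow_apply_nonneg hP k v u) (exitWeight_nonneg hP W u)
    calc phi P W w (k + 2) = ∑ v ∈ W, P w v * phi P W v (k + 1) := phi_add_two P W w k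
      _ ≤ ∑ v ∈ W, P w v * (P ^ k *ᵥ exitWeight P W) v :=
        sum_le_sum fun v hv => mul_le_mul_of_nonneg_left (ih hv) (hP w v)
      _ ≤ ∑ v, P w v * (P ^ k *ᵥ exitWeight P W) v :=
        sum_le_univ_sum_of_nonneg fun v => mul_nonneg (hP w v) (hnonneg v)
      _ = (P ^ (k + 1) *ᵥ exitWeight P W) w := by rw [pow_succ', ← mulVec_mulVec]; rfl

lemma sum_mul_sum_phi_le (hP : ∀ u v, 0 ≤ P u v) (hp : ∀ v, 0 ≤ p v) (hinv : p ᵥ* P = p)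
    (t : ℕ) : ∑ w ∈ W, p w * ∑ k ∈ Icc 1 t, phi P W w k ≤ t * (p ⬝ᵥ exitWeight P W) := by
  have hnonneg : ∀ k v, 0 ≤ (P ^ k *ᵥ exitWeight P W) v := fun k v =>
    sum_nonneg fun u _ => mul_nonneg (pow_apply_nonneg hP k v u) (exitWeight_nonneg hP W u)
  calc ∑ w ∈ W, p w * ∑ k ∈ Icc 1 t, phi P W w k
      ≤ ∑ w ∈ W, p w * ∑ k ∈ Icc 1 t, (P ^ (k - 1) *ᵥ exitWeight P W) w := by
        gcongr with w hw k hk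
        · exact hp w
        · obtain ⟨j, rfl⟩ := Nat.exists_eq_add_of_le' (mem_Icc.mp hk).1
          exact phi_le_pow_mulVec_exitWeight hP j hw
    _ ≤ ∑ w, p w * ∑ k ∈ Icc 1 t, (P ^ (k - 1) *ᵥ exitWeight P W) w :=
        sum_le_univ_sum_of_nonneg fun w => mul_nonneg (hp w) (sum_nonneg fun k _ => hnonneg _ w)
    _ = ∑ k ∈ Icc 1 t, p ⬝ᵥ (P ^ (k - 1) *ᵥ exitWeight P W) := by
        simp only [mul_sum, dotProduct]; exact sum_comm
    _ = t * (p ⬝ᵥ exitWeight P W) := by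
        simp [dotProduct_mulVec, vecMul_pow_eq_self hinv]

lemma exitProbAux_mul_sum_le (hP : ∀ u v, 0 ≤ P u v) (hp : ∀ v, 0 ≤ p v) (hinv : p ᵥ* P = p)
    {t : ℕ} (ht : 1 ≤ t) : exitProbAux P p W t * ∑ w ∈ W, p w ≤ p ⬝ᵥ exitWeight P W := by
  unfold exitProbAux
  split_ifs with hne
  · set F := W.filter fun w => 0 < p w
    have hterm : ∀ w ∈ W, p w * F.inf' hne (fun w => 1 / (t : ℝ) * ∑ k ∈ Icc 1 t, phi P W w k)
        ≤ p w * (1 / (t : ℝ) * ∑ k ∈ Icc 1 t, phi P W w k) := fun w hw => by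
      rcases (hp w).eq_or_lt with h | h
      · simp [← h]
      · exact mul_le_mul_of_nonneg_left (inf'_le _ (mem_filter.mpr ⟨hw, h⟩)) h.le
    have ht' : (0 : ℝ) < t := by exact_mod_cast ht
    calc _ = ∑ w ∈ W, p w * F.inf' hne (fun w => 1 / (t : ℝ) * ∑ k ∈ Icc 1 t, phi P W w k) := by
          rw [mul_sum]; exact sum_congr rfl fun w _ => mul_comm _ _
      _ ≤ 1 / (t : ℝ) * ∑ w ∈ W, p w * ∑ k ∈ Icc 1 t, phi P W w k := by
          rw [mul_sum]
          exact (sum_le_sum hterm).trans_eq (sum_congr rfl fun w _ => by ring)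
      _ ≤ 1 / (t : ℝ) * (t * (p ⬝ᵥ exitWeight P W)) := by
          gcongr; exact sum_mul_sum_phi_le hP hp hinv t
      _ = p ⬝ᵥ exitWeight P W := by field_simp
  · have hW : ∑ w ∈ W, p w = 0 := sum_eq_zero fun w hw =>
      le_antisymm (not_lt.mp fun h => hne ⟨w, mem_filter.mpr ⟨hw, h⟩⟩) (hp w)
    rw [hW, mul_zero]
    exact sum_nonneg fun v _ => mul_nonneg (hp v) (exitWeight_nonneg hP W v)

lemma exitProb_mul_sum_le (hP : ∀ u v, 0 ≤ P u v) (hp : ∀ v, 0 ≤ p v) (hinv : p ᵥ* P = p) :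
    exitProb P p W * ∑ w ∈ W, p w ≤ p ⬝ᵥ exitWeight P W := by
  have hS : 0 ≤ p ⬝ᵥ exitWeight P W :=
    sum_nonneg fun v _ => mul_nonneg (hp v) (exitWeight_nonneg hP W v)
  rcases (sum_nonneg fun w _ => hp w : 0 ≤ ∑ w ∈ W, p w).eq_or_lt with h | h
  · rw [← h, mul_zero]; exact hS
  · rw [← le_div_iff₀ h]
    refine Real.sSup_le ?_ (div_nonneg hS h.le)
    rintro _ ⟨t, ht, rfl⟩
    rw [le_div_iff₀ h]
    exact exitProbAux_mul_sum_le hP hp hinv ht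

end ExitProbability

lemma exitProb_mul_entranceTime_mul_sum_le_one [Fintype V] {P Pt : Matrix V V ℝ}
    {p tau : V → ℝ} {W : Finset V} (hP : IsStochastic P) (hPt : ∀ u v, 0 ≤ Pt u v)
    (hrows : ∀ u ∉ W, Pt u = P u) (hp : InvariantProb Pt p) (htau0 : ∀ u ∈ W, tau u = 0)
    (htau1 : ∀ u ∉ W, tau u = 1 + ∑ v, P u v * tau v) :
    exitProb Pt p W * entranceTime tau W * ∑ w ∈ W, p w ≤ 1 := calc
  _ = entranceTime tau W * (exitProb Pt p W * ∑ w ∈ W, p w) := by ring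
  _ ≤ entranceTime tau W * (p ⬝ᵥ exitWeight Pt W) :=
    mul_le_mul_of_nonneg_left (exitProb_mul_sum_le hPt hp.1 hp.vecMul_eq)
      (entranceTime_nonneg (hittingTime_nonneg hP htau0 htau1))
  _ ≤ 1 := entranceTime_mul_dotProduct_exitWeight_le_one hP hPt hrows hp htau0 htau1
lemma xstar_le_one : xstar ≤ 1 := by
  set f : ℝ → ℝ := fun x => x * Real.log (Real.exp 2 / x)
  have hle : Real.exp (-2) ≤ 1 := Real.exp_le_one_iff.mpr (by norm_num)
  have hcont : ContinuousOn f (Set.Icc (Real.exp (-2)) 1) := by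
    refine continuousOn_id.mul (ContinuousOn.log (continuousOn_const.div continuousOn_id ?_) ?_)
      <;> intro x hx <;> have := (Real.exp_pos (-2)).trans_le hx.1 <;> positivity
  have hlow : f (Real.exp (-2)) ≤ 1 := by
    have h4 : 4 ≤ Real.exp 2 := by
      nlinarith [Real.quadratic_le_exp_of_nonneg (show (0 : ℝ) ≤ 2 by norm_num)]
    have hf : f (Real.exp (-2)) = 4 / Real.exp 2 := by
      simp only [f]
      rw [← Real.exp_sub, Real.log_exp, Real.exp_neg]
      ring
    rwa [hf, div_le_one (Real.exp_pos 2)]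
  have hhigh : 1 ≤ f 1 := by norm_num [f]
  obtain ⟨c, hc, hfc⟩ := intermediate_value_Icc hle hcont (Set.mem_Icc.mpr ⟨hlow, hhigh⟩)
  calc xstar ≤ c := csInf_le ⟨0, fun x hx => hx.1.le⟩ ⟨(Real.exp_pos _).trans_le hc.1, hfc⟩
    _ ≤ 1 := hc.2

/-- For `x > 0` the choice `m = ⌈log x⁻¹⌉` gives `m x + e^{-m} ≤ (log x⁻¹ + 2) x = x log (e²/x)`. -/
lemma le_Psi_of_forall_nat {d x : ℝ} (hx : 0 ≤ x) (hd : d ≤ 1)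
    (h : ∀ m : ℕ, d ≤ m * x + Real.exp (-m)) : d ≤ Psi x := by
  unfold Psi
  split_ifs with hxs
  · rcases hx.eq_or_lt with rfl | hx0
    · have hlim : Filter.Tendsto (fun m : ℕ => Real.exp (-m)) Filter.atTop (nhds 0) :=
        Real.tendsto_exp_neg_atTop_nhds_zero.comp tendsto_natCast_atTop_atTop
      simpa using ge_of_tendsto' hlim fun m => by simpa using h m
    · set L := Real.log x⁻¹
      have hL : 0 ≤ L := Real.log_nonneg ((one_le_inv₀ hx0).mpr (hxs.trans xstar_le_one))
      have hexp : Real.exp (-⌈L⌉₊) ≤ x := calc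
        Real.exp (-⌈L⌉₊) ≤ Real.exp (-L) := Real.exp_le_exp.mpr (neg_le_neg (Nat.le_ceil L))
        _ = x := by rw [Real.exp_neg, Real.exp_log (inv_pos.mpr hx0), inv_inv]
      calc d ≤ ⌈L⌉₊ * x + Real.exp (-⌈L⌉₊) := h _
        _ ≤ (L + 1) * x + x := by gcongr; exact (Nat.ceil_lt_add_one hL).le
        _ = x * Real.log (Real.exp 2 / x) := by
          rw [Real.log_div (Real.exp_pos 2).ne' hx0.ne', Real.log_exp]
          simp only [L, Real.log_inv]; ring
  · exact hd

theorem stmt2_general [Fintype V] (P Pt : Matrix V V ℝ) (pi pit : V → ℝ) (tmix : ℕ)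
    (hP : IsStochastic P) (hPt : IsStochastic Pt)
    (hpi : InvariantProb P pi) (hpit : InvariantProb Pt pit)
    (htmix2 : ∀ u v : V, tvDist ((P ^ tmix) u) ((P ^ tmix) v) ≤ 1 / Real.exp 1)
    (W : Finset V) (hW : ∀ u : V, P u ≠ Pt u → u ∈ W)
    (tau : V → ℝ) (htau0 : ∀ u ∈ W, tau u = 0)
    (htau1 : ∀ u ∉ W, tau u = 1 + ∑ v, P u v * tau v)
    (hpos : 0 < exitProb Pt pit W * entranceTime tau W) :
    tvDist pit pi ≤ Psi ((tmix : ℝ) / (exitProb Pt pit W * entranceTime tau W)) := by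
  set c := exitProb Pt pit W * entranceTime tau W
  have hrows : ∀ u ∉ W, Pt u = P u := fun u hu => (not_imp_comm.mp (hW u) hu).symm
  have hmass : ∑ w ∈ W, pit w ≤ 1 / c := by
    rw [le_div_iff₀' hpos]
    exact exitProb_mul_entranceTime_mul_sum_le_one hP hPt.1 hrows hpit htau0 htau1
  have hstep : tvDist pit (pit ᵥ* P) ≤ ∑ w ∈ W, pit w := by
    simpa [hpit.vecMul_eq] using hPt.tvDist_vecMul_le_sum_of_rows_eq hP hpit.1 hrows
  refine le_Psi_of_forall_nat (by positivity) (tvDist_le_one hpit.1 hpit.2.1 hpi.1 hpi.2.1)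
    fun m => ?_
  have hdecay : (1 / Real.exp 1) ^ m = Real.exp (-m) := by
    rw [one_div, inv_pow, Real.exp_one_pow, Real.exp_neg]
  calc tvDist pit pi
      ≤ (tmix * m : ℕ) * tvDist pit (pit ᵥ* P) + (1 / Real.exp 1) ^ m :=
        hP.tvDist_le_of_mixing hpit.1 hpit.2.1 hpi (by positivity) htmix2 m
    _ ≤ (tmix * m : ℕ) * (1 / c) + Real.exp (-m) := by
        rw [hdecay]; gcongr; exact hstep.trans hmass
    _ = m * (tmix / c) + Real.exp (-m) := by push_cast; ring

/-- Theorem 1 (main theorem) of the paper: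
`‖pit - pi‖ ≤ Ψ(tmix / (γ̃_W · τ*_W))`. -/
theorem stmt2 [Fintype V] (P Pt : Matrix V V ℝ) (pi pit : V → ℝ) (tmix : ℕ)
    (hP : IsStochastic P) (hPt : IsStochastic Pt) (hirr : IrreducibleMatrix P)
    (hpi : InvariantProb P pi) (hpit : InvariantProb Pt pit)
    (htmix1 : 1 ≤ tmix)
    (htmix2 : ∀ u v : V, tvDist ((P ^ tmix) u) ((P ^ tmix) v) ≤ 1 / Real.exp 1)
    (htmix3 : ∀ s : ℕ, 1 ≤ s →
      (∀ u v : V, tvDist ((P ^ s) u) ((P ^ s) v) ≤ 1 / Real.exp 1) → tmix ≤ s)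
    (W : Finset V) (hW : ∀ u : V, P u ≠ Pt u → u ∈ W) (hWne : W ≠ Finset.univ)
    (tau : V → ℝ) (htau0 : ∀ u ∈ W, tau u = 0)
    (htau1 : ∀ u ∉ W, tau u = 1 + ∑ v, P u v * tau v)
    (hpos : 0 < exitProb Pt pit W * entranceTime tau W) :
    tvDist pit pi ≤ Psi ((tmix : ℝ) / (exitProb Pt pit W * entranceTime tau W)) :=
  stmt2_general P Pt pi pit tmix hP hPt hpi hpit htmix2 W hW tau htau0 htau1 hpos
end

section
/- Let P̃ be an irreducible stochastic matrix on a finite set 𝒱 with invariant probability vector π̃, and let W ⊆ 𝒱 be nonempty with W ≠ 𝒱. Let δ := min{ P̃_{wv} : w ∈ W, v ∈ 𝒱, P̃_{wv} > 0 }. Then the exit probability from W satisfies γ̃_W ≥ δ^{|W|} / |W|. -/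
/-!
Irreducibility gives, from each `w ∈ W`, a path of positive-probability steps that stays in `W`
without repeating a state and then leaves `W`; it therefore leaves after some `n ≤ |W|` steps.
Every step of it out of `W` has probability at least `δ`, so `φ_w(n) ≥ δ^n ≥ δ^{|W|}`, and the
average of `φ_w(1), …, φ_w(|W|)` is at least `δ^{|W|} / |W|` for every `w ∈ W`. This is the term
`t = |W|` of the supremum defining `γ̃_W`, which is bounded since `φ_w(k) ≤ 1`.
-/

open scoped Classical BigOperators
open Finset

variable {V : Type*}

def pathWeight (P : Matrix V V ℝ) {k : ℕ} (ξ : Fin (k + 1) → V) : ℝ :=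
  ∏ i : Fin k, P (ξ i.castSucc) (ξ i.succ)

open Fin.NatCast in
theorem prod_range_eq_pathWeight (P : Matrix V V ℝ) {k : ℕ} (ξ : Fin (k + 1) → V) :
    ∏ l ∈ range k, P (ξ l) (ξ (l + 1)) = pathWeight P ξ := by
  rw [← Fin.prod_univ_eq_prod_range (fun l => P (ξ l) (ξ (l + 1))), pathWeight]
  simp only [Fin.coe_eq_castSucc, Fin.coeSucc_eq_succ]

theorem pathWeight_nonneg {P : Matrix V V ℝ} (hP : ∀ u v, 0 ≤ P u v) {k : ℕ}
    (ξ : Fin (k + 1) → V) : 0 ≤ pathWeight P ξ :=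
  prod_nonneg fun _ _ => hP _ _

theorem pathWeight_cons (P : Matrix V V ℝ) {k : ℕ} (u : V) (ξ : Fin (k + 1) → V) :
    pathWeight P (Fin.cons u ξ : Fin (k + 2) → V) = P u (ξ 0) * pathWeight P ξ := by
  simp only [pathWeight, Fin.prod_univ_succ, Fin.castSucc_zero, Fin.cons_zero,
    ← Fin.succ_castSucc, Fin.cons_succ]

theorem sum_pathWeight_cons [Fintype V] {P : Matrix V V ℝ} (hP : IsStochastic P) (k : ℕ)
    (u : V) :
    ∑ τ : Fin k → V, pathWeight P (Fin.cons u τ : Fin (k + 1) → V) = 1 := by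
  induction k generalizing u with
  | zero => simp [pathWeight]
  | succ k ih =>
    rw [← (Fin.consEquiv fun _ => V).sum_comp, Fintype.sum_prod_type]
    simp only [Fin.consEquiv, Equiv.coe_fn_mk, pathWeight_cons, Fin.cons_zero, ← mul_sum, ih,
      mul_one]
    exact hP.2 u

theorem sum_filter_zero_eq_sum_cons [Fintype V] {k : ℕ} (f : (Fin (k + 1) → V) → ℝ) (u : V) :
    ∑ ξ ∈ univ.filter (fun ξ : Fin (k + 1) → V => ξ 0 = u), f ξ = ∑ τ, f (Fin.cons u τ) := by
  rw [sum_filter, ← (Fin.consEquiv fun _ => V).sum_comp, Fintype.sum_prod_type]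
  simp [Fin.consEquiv]

section ExitTimes

variable [Fintype V] {P : Matrix V V ℝ} {W : Finset V}

open Fin.NatCast in
theorem phi_eq_sum_pathWeight (w : V) (k : ℕ) :
    phi P W w k = ∑ ξ ∈ univ.filter (fun ξ : Fin (k + 1) → V =>
      ξ 0 = w ∧ (∀ l : ℕ, 0 < l → l < k → ξ l ∈ W) ∧ ξ k ∉ W), pathWeight P ξ := by
  simp only [phi, prod_range_eq_pathWeight]

theorem phi_nonneg (hP : ∀ u v, 0 ≤ P u v) (w : V) (k : ℕ) : 0 ≤ phi P W w k := by
  rw [phi_eq_sum_pathWeight]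
  exact sum_nonneg fun ξ _ => pathWeight_nonneg hP ξ

theorem phi_le_one (hP : IsStochastic P) (w : V) (k : ℕ) : phi P W w k ≤ 1 :=
  calc phi P W w k ≤ ∑ ξ ∈ univ.filter (fun ξ : Fin (k + 1) → V => ξ 0 = w), pathWeight P ξ := by
        rw [phi_eq_sum_pathWeight]
        exact sum_le_sum_of_subset_of_nonneg (monotone_filter_right _ fun _ _ h => h.1)
          fun ξ _ _ => pathWeight_nonneg hP.1 ξ
    _ = 1 := by rw [sum_filter_zero_eq_sum_cons, sum_pathWeight_cons hP]

open Fin.NatCast in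
theorem pow_le_phi (hP : ∀ u v, 0 ≤ P u v) {x : ℕ → V} {n : ℕ} {δ : ℝ} (hδ : 0 ≤ δ)
    (hmem : ∀ l < n, x l ∈ W) (hout : x n ∉ W) (hstep : ∀ l < n, δ ≤ P (x l) (x (l + 1))) :
    δ ^ n ≤ phi P W (x 0) n := by
  let ξ : Fin (n + 1) → V := fun i => x i
  have hξ : ∀ l ≤ n, ξ l = x l := fun l hl => congrArg x (Fin.val_cast_of_lt (by omega))
  have hξmem : ξ ∈ univ.filter (fun ξ : Fin (n + 1) → V =>
      ξ 0 = x 0 ∧ (∀ l : ℕ, 0 < l → l < n → ξ l ∈ W) ∧ ξ n ∉ W) := by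
    refine mem_filter.2 ⟨mem_univ ξ, rfl, fun l _ hl => ?_, ?_⟩
    · rw [hξ l hl.le]
      exact hmem l hl
    · rwa [hξ n le_rfl]
  calc δ ^ n = ∏ _i : Fin n, δ := (Fin.prod_const n δ).symm
    _ ≤ pathWeight P ξ := prod_le_prod (fun _ _ => hδ) fun i _ => hstep i i.isLt
    _ ≤ phi P W (x 0) n := by
      rw [phi_eq_sum_pathWeight]
      exact single_le_sum (fun ξ _ => pathWeight_nonneg hP ξ) hξmem

end ExitTimes

structure IsExitPath (P : Matrix V V ℝ) (W : Finset V) (x : ℕ → V) (n : ℕ) : Prop where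
  mem : ∀ l < n, x l ∈ W
  not_mem : x n ∉ W
  pos : ∀ l < n, 0 < P (x l) (x (l + 1))
  injOn : Set.InjOn x (Set.Iio n)

namespace IsExitPath

variable {P : Matrix V V ℝ} {W : Finset V} {x : ℕ → V} {n : ℕ}

theorem of_not_mem (hx : x 0 ∉ W) : IsExitPath P W x 0 :=
  ⟨by simp, hx, by simp, by simp⟩

theorem drop (hx : IsExitPath P W x n) {k : ℕ} (hk : k ≤ n) :
    IsExitPath P W (fun l => x (l + k)) (n - k) where
  mem l hl := hx.mem _ (by omega)
  not_mem := by simpa [Nat.sub_add_cancel hk] using hx.not_mem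
  pos l hl := by simpa [Nat.add_right_comm] using hx.pos (l + k) (by omega)
  injOn a ha b hb hab := by
    have : a + k = b + k := hx.injOn (by simp at ha ⊢; omega) (by simp at hb ⊢; omega) hab
    omega

theorem cons (hx : IsExitPath P W x n) {u : V} (hu : u ∈ W) (hpos : 0 < P u (x 0))
    (hnew : ∀ l < n, x l ≠ u) :
    IsExitPath P W (fun | 0 => u | l + 1 => x l) (n + 1) where
  mem
    | 0, _ => hu
    | l + 1, hl => hx.mem l (by omega)
  not_mem := hx.not_mem
  pos
    | 0, _ => hpos
    | l + 1, hl => hx.pos l (by omega)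
  injOn
    | 0, _, 0, _, _ => rfl
    | 0, _, b + 1, hb, h => absurd h.symm (hnew b (by simp at hb; omega))
    | a + 1, ha, 0, _, h => absurd h (hnew a (by simp at ha; omega))
    | a + 1, ha, b + 1, hb, h => by
      rw [hx.injOn (by simp at ha ⊢; omega) (by simp at hb ⊢; omega) h]

theorem length_le_card (hx : IsExitPath P W x n) : n ≤ W.card := by
  simpa using card_le_card_of_injOn x (s := range n) (fun l hl => hx.mem l (mem_range.1 hl))
    (by simpa using hx.injOn)

end IsExitPath

theorem exists_isExitPath {P : Matrix V V ℝ} {W : Finset V} {u v : V} (hv : v ∉ W)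
    (h : Relation.ReflTransGen (fun a b => 0 < P a b) u v) :
    ∃ x n, x 0 = u ∧ IsExitPath P W x n := by
  induction h using Relation.ReflTransGen.head_induction_on with
  | refl => exact ⟨fun _ => v, 0, rfl, .of_not_mem hv⟩
  | @head u b hub _ ih =>
    obtain ⟨y, m, rfl, hy⟩ := ih
    by_cases hu : u ∈ W
    · by_cases hrep : ∃ k < m, y k = u
      · obtain ⟨k, hk, rfl⟩ := hrep
        exact ⟨_, _, by simp, hy.drop hk.le⟩
      · push Not at hrep
        exact ⟨_, _, rfl, hy.cons hu hub hrep⟩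
    · exact ⟨fun _ => u, 0, rfl, .of_not_mem hu⟩

theorem IsStochastic.le_one [Fintype V] {P : Matrix V V ℝ} (hP : IsStochastic P) (u v : V) :
    P u v ≤ 1 :=
  hP.2 u ▸ single_le_sum (fun v _ => hP.1 u v) (mem_univ v)

theorem IsStochastic.exists_pos [Fintype V] {P : Matrix V V ℝ} (hP : IsStochastic P) (u : V) :
    ∃ v, 0 < P u v := by
  obtain ⟨v, -, hv⟩ := exists_lt_of_sum_lt (s := univ) (f := 0) (g := P u) (by simp [hP.2 u])
  exact ⟨v, hv⟩

noncomputable def minPosEntry (P : Matrix V V ℝ) (W : Finset V) : ℝ :=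
  sInf {x : ℝ | ∃ w ∈ W, ∃ v : V, 0 < P w v ∧ x = P w v}

theorem minPosEntry_le {P : Matrix V V ℝ} {W : Finset V} {w v : V} (hw : w ∈ W)
    (hwv : 0 < P w v) : minPosEntry P W ≤ P w v :=
  csInf_le ⟨0, by rintro _ ⟨_, _, _, h, rfl⟩; exact h.le⟩ ⟨w, hw, v, hwv, rfl⟩

section MinPosEntry

variable [Fintype V] {P : Matrix V V ℝ} {W : Finset V}

theorem minPosEntry_mem (hP : IsStochastic P) (hW : W.Nonempty) :
    ∃ w ∈ W, ∃ v : V, 0 < P w v ∧ minPosEntry P W = P w v := by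
  refine Set.Nonempty.csInf_mem (s := {x : ℝ | ∃ w ∈ W, ∃ v : V, 0 < P w v ∧ x = P w v}) ?_
    ((Set.finite_range fun e : V × V => P e.1 e.2).subset ?_)
  · obtain ⟨w, hw⟩ := hW
    obtain ⟨v, hv⟩ := hP.exists_pos w
    exact ⟨_, w, hw, v, hv, rfl⟩
  · rintro _ ⟨w, -, v, -, rfl⟩
    exact ⟨(w, v), rfl⟩

theorem minPosEntry_pos (hP : IsStochastic P) (hW : W.Nonempty) : 0 < minPosEntry P W := by
  obtain ⟨w, -, v, hv, h⟩ := minPosEntry_mem hP hW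
  exact h ▸ hv

theorem minPosEntry_le_one (hP : IsStochastic P) (hW : W.Nonempty) : minPosEntry P W ≤ 1 := by
  obtain ⟨w, -, v, -, h⟩ := minPosEntry_mem hP hW
  exact h ▸ hP.le_one w v

theorem minPosEntry_pow_card_le_sum_phi (hP : IsStochastic P) {w v : V} (hw : w ∈ W)
    (hv : v ∉ W) (hwv : Relation.ReflTransGen (fun a b => 0 < P a b) w v) :
    minPosEntry P W ^ W.card ≤ ∑ k ∈ Icc 1 W.card, phi P W w k := by
  obtain ⟨x, n, rfl, hx⟩ := exists_isExitPath hv hwv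
  have hn : 1 ≤ n := Nat.one_le_iff_ne_zero.2 (by rintro rfl; exact hx.not_mem hw)
  have hδ := minPosEntry_pos hP ⟨_, hw⟩
  calc minPosEntry P W ^ W.card
      ≤ minPosEntry P W ^ n :=
        pow_le_pow_of_le_one hδ.le (minPosEntry_le_one hP ⟨_, hw⟩) hx.length_le_card
    _ ≤ phi P W (x 0) n := pow_le_phi hP.1 hδ.le hx.mem hx.not_mem fun l hl =>
        minPosEntry_le (hx.mem l hl) (hx.pos l hl)
    _ ≤ ∑ k ∈ Icc 1 W.card, phi P W (x 0) k :=
        single_le_sum (fun k _ => phi_nonneg hP.1 _ k) (mem_Icc.2 ⟨hn, hx.length_le_card⟩)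

end MinPosEntry

section ExitProb

variable [Fintype V] {P : Matrix V V ℝ} {W : Finset V}

theorem le_exitProbAux (p : V → ℝ) {c : ℝ} {t : ℕ} (hc : c ≤ t)
    (h : ∀ w ∈ W, c ≤ ∑ k ∈ Icc 1 t, phi P W w k) : c / t ≤ exitProbAux P p W t := by
  unfold exitProbAux
  split
  · refine le_inf' _ _ fun w hw => ?_
    rw [div_eq_inv_mul, one_div]
    exact mul_le_mul_of_nonneg_left (h w (mem_filter.1 hw).1) (by positivity)
  · exact div_le_one_of_le₀ hc t.cast_nonneg

theorem exitProbAux_le_one (hP : IsStochastic P) (p : V → ℝ) (t : ℕ) :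
    exitProbAux P p W t ≤ 1 := by
  unfold exitProbAux
  split
  · rename_i h
    obtain ⟨w, hw⟩ := h
    refine (inf'_le _ hw).trans ?_
    calc 1 / (t : ℝ) * ∑ k ∈ Icc 1 t, phi P W w k
        ≤ 1 / (t : ℝ) * t := by
          gcongr
          simpa using sum_le_card_nsmul (Icc 1 t) _ 1 fun k _ => phi_le_one hP w k
      _ ≤ 1 := by
          rcases t.eq_zero_or_pos with rfl | ht
          · simp
          · rw [one_div_mul_cancel (by positivity)]
  · exact le_rfl

theorem exitProbAux_le_exitProb (hP : IsStochastic P) (p : V → ℝ) {t : ℕ} (ht : 1 ≤ t) :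
    exitProbAux P p W t ≤ exitProb P p W :=
  le_csSup ⟨1, by rintro _ ⟨s, -, rfl⟩; exact exitProbAux_le_one hP p s⟩ ⟨t, ht, rfl⟩

end ExitProb

theorem stmt16_general [Fintype V] (Pt : Matrix V V ℝ) (pit : V → ℝ) (W : Finset V)
    (hPt : IsStochastic Pt) (hirr : IrreducibleMatrix Pt)
    (hW1 : W.Nonempty) (hW2 : W ≠ Finset.univ) :
    sInf {x : ℝ | ∃ w ∈ W, ∃ v : V, 0 < Pt w v ∧ x = Pt w v} ^ W.card / (W.card : ℝ)
      ≤ exitProb Pt pit W := by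
  obtain ⟨v, hv⟩ : ∃ v, v ∉ W := by simpa [eq_univ_iff_forall] using hW2
  have hcard : 1 ≤ W.card := card_pos.2 hW1
  calc minPosEntry Pt W ^ W.card / (W.card : ℝ)
      ≤ exitProbAux Pt pit W W.card :=
        le_exitProbAux pit
          ((pow_le_one₀ (minPosEntry_pos hPt hW1).le (minPosEntry_le_one hPt hW1)).trans
            (by exact_mod_cast hcard))
          fun w hw => minPosEntry_pow_card_le_sum_phi hPt hw hv (hirr w v)
    _ ≤ exitProb Pt pit W := exitProbAux_le_exitProb hPt pit hcard

/-- for irreducible `Pt` and nonempty `W ≠ 𝒱`, with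
`δ := min { Pt w v : w ∈ W, Pt w v > 0 }`, the exit probability satisfies
`γ̃_W ≥ δ^{|W|} / |W|`. -/
theorem stmt16 [Fintype V] (Pt : Matrix V V ℝ) (pit : V → ℝ) (W : Finset V)
    (hPt : IsStochastic Pt) (hirr : IrreducibleMatrix Pt) (hpit : InvariantProb Pt pit)
    (hW1 : W.Nonempty) (hW2 : W ≠ Finset.univ) :
    sInf {x : ℝ | ∃ w ∈ W, ∃ v : V, 0 < Pt w v ∧ x = Pt w v} ^ W.card / (W.card : ℝ)
      ≤ exitProb Pt pit W :=
  stmt16_general Pt pit W hPt hirr hW1 hW2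
end
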